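/- Let G be an ordered mean and 𝔸 = [Aᵢⱼ] an n×k array of positive definite operators with mI ≤ Aᵢⱼ ≤ MI. Then Gₙ(ω; Gₖ(λ; 𝔸¹), …, Gₖ(λ; 𝔸ⁿ)) ≤ Gₖ(λ; Gₙ(ω; 𝔸₁), …, Gₙ(ω; 𝔸ₖ)) + (√M − √m)²·I. -/

import Mathlib

open ContinuousLinearMap in
/-- A positive definite (positive invertible) bounded operator on a Hilbert space. -/
def IsPosDef {H : Type*} [NormedAddCommGroup H] [InnerProductSpace ℂ H] [CompleteSpace H]
    (A : H →L[ℂ] H) : Prop := A.IsPositive ∧ IsUnit A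

/-- A positive probability vector. -/
def IsProbVec {n : ℕ} (w : Fin n → ℝ) : Prop := (∀ i, 0 < w i) ∧ ∑ i, w i = 1

/-- An ordered mean: a family of weighted means of positive definite operators satisfying
homogeneity, monotonicity, joint concavity and the arithmetic-`G`-harmonic mean inequalities
with respect to the Loewner order. -/
structure OrderedMean (H : Type*) [NormedAddCommGroup H] [InnerProductSpace ℂ H]
    [CompleteSpace H] where
  G : ∀ n : ℕ, (Fin n → ℝ) → (Fin n → (H →L[ℂ] H)) → (H →L[ℂ] H)
  posDef : ∀ n w A, IsProbVec w → (∀ i, IsPosDef (A i)) → IsPosDef (G n w A)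
  homog : ∀ n w A (a : ℝ), IsProbVec w → (∀ i, IsPosDef (A i)) → 0 < a →
    G n w (fun i => a • A i) = a • G n w A
  mono : ∀ n w A B, IsProbVec w → (∀ i, IsPosDef (A i)) → (∀ i, IsPosDef (B i)) →
    (∀ i, B i ≤ A i) → G n w B ≤ G n w A
  concave : ∀ n w A B (s : ℝ), IsProbVec w → (∀ i, IsPosDef (A i)) → (∀ i, IsPosDef (B i)) →
    0 ≤ s → s ≤ 1 →
    (1 - s) • G n w A + s • G n w B ≤ G n w (fun i => (1 - s) • A i + s • B i)
  harm_le : ∀ n w A, IsProbVec w → (∀ i, IsPosDef (A i)) →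
    Ring.inverse (∑ i, w i • Ring.inverse (A i)) ≤ G n w A
  le_arith : ∀ n w A, IsProbVec w → (∀ i, IsPosDef (A i)) →
    G n w A ≤ ∑ i, w i • A i

/-- The parameterized ordered mean `G^μ`. -/
noncomputable def OrderedMean.pMean {H : Type*} [NormedAddCommGroup H] [InnerProductSpace ℂ H]
    [CompleteSpace H] (G : OrderedMean H) (μ : ℝ) (n : ℕ) (w : Fin n → ℝ)
    (A : Fin n → (H →L[ℂ] H)) : H →L[ℂ] H :=
  if 0 ≤ μ then G.G n w (fun i => A i + μ • 1) - μ • 1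
  else Ring.inverse (G.G n w (fun i => Ring.inverse (A i) + (-μ) • 1) - (-μ) • 1)

/-- The constant `ρ_{M,m}(t)`. -/
noncomputable def rhoConst (M m t : ℝ) : ℝ :=
  if M / m ≤ t then (1 - t) * m
  else if t ≤ m / M then (1 - t) * M
  else M + m - 2 * Real.sqrt (t * M * m)

/-!
Both sides are compared with the global means of the entries, weighted by `ωᵢ λⱼ`: the arithmetic
mean `S = ∑ᵢ ωᵢ ∑ⱼ λⱼ Aᵢⱼ` and the harmonic mean `R⁻¹`, where `R = ∑ⱼ λⱼ ∑ᵢ ωᵢ Aᵢⱼ⁻¹`. Applying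
`G ≤` arithmetic mean twice bounds the left side by `S`; applying harmonic mean `≤ G` twice, with
the antitonicity of the inverse in between, bounds `Gₖ(λ; Gₙ(ω; 𝔸₁), …, Gₙ(ω; 𝔸ₖ))` from below by
`R⁻¹`. What remains is the Kantorovich-type inequality `S ≤ R⁻¹ + (√M - √m)²`, which holds for any
convex combination of operators with spectra in `[m, M]`.
-/

section CStarAlgebra

variable {A : Type*} [CStarAlgebra A] [PartialOrder A] [StarOrderedRing A]

theorem IsStrictlyPositive.of_smul_one_le {m : ℝ} (hm : 0 < m) {a : A} (h : m • (1 : A) ≤ a) :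
    IsStrictlyPositive a :=
  (isStrictlyPositive_one.smul hm).of_le h

theorem IsStrictlyPositive.sum_smul {ι : Type*} [Fintype ι] {p : ι → ℝ} (hp : ∀ t, 0 ≤ p t)
    (hp1 : ∑ t, p t = 1) {x : ι → A} (hx : ∀ t, IsStrictlyPositive (x t)) :
    IsStrictlyPositive (∑ t, p t • x t) := by
  classical
  obtain ⟨t, -, ht⟩ := Finset.exists_ne_zero_of_sum_ne_zero (hp1 ▸ one_ne_zero)
  rw [← Finset.add_sum_erase _ _ (Finset.mem_univ t)]
  exact ((hx t).smul ((hp t).lt_of_ne' ht)).add_nonneg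
    (Finset.sum_nonneg fun s _ => smul_nonneg (hp s) (hx s).nonneg)

/-- Operator form of `(x - m) (M - x) / x ≥ 0` on `[m, M]`. -/
theorem add_smul_ringInverse_le {m M : ℝ} (hm : 0 < m) {a : A} (h₁ : m • (1 : A) ≤ a)
    (h₂ : a ≤ M • (1 : A)) : a + (M * m) • Ring.inverse a ≤ (M + m) • (1 : A) := by
  have ha := IsStrictlyPositive.of_smul_one_le hm h₁
  have hinv := ha.ringInverse
  lift a to Aˣ using ha.isUnit
  rw [Ring.inverse_unit] at hinv ⊢
  have hMa : Commute (M • 1 - (a : A)) a :=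
    ((Commute.one_left _).smul_left M).sub_left (Commute.refl _)
  have hma : Commute ((a : A) - m • 1) a :=
    (Commute.refl _).sub_left ((Commute.one_left _).smul_left m)
  have key : 0 ≤ (M • 1 - ↑a) * (↑a - m • 1) * (↑a⁻¹ : A) :=
    Commute.mul_nonneg
      (Commute.mul_nonneg (sub_nonneg.2 h₂) (sub_nonneg.2 h₁)
        (hMa.sub_right ((Commute.one_right _).smul_right m)))
      hinv.nonneg (hMa.mul_left hma).units_inv_right
  have hexp : (M • 1 - ↑a) * (↑a - m • 1) * (↑a⁻¹ : A) =
      (M + m) • 1 - (↑a + (M * m) • ↑a⁻¹) := by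
    simp only [sub_mul, mul_sub, smul_mul_assoc, mul_smul_comm, one_mul, mul_one, mul_assoc,
      Units.mul_inv]
    module
  rwa [hexp, sub_nonneg] at key

/-- The tangent-line bound for `x ↦ 1 / x` at `x = 1 / α`. -/
theorem two_mul_smul_one_sub_sq_smul_le_ringInverse {a : A} (ha : IsStrictlyPositive a) (α : ℝ) :
    (2 * α) • (1 : A) - α ^ 2 • a ≤ Ring.inverse a := by
  have hinv := ha.ringInverse
  have hsa := ha.isSelfAdjoint
  lift a to Aˣ using ha.isUnit
  rw [Ring.inverse_unit] at hinv ⊢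
  have key := star_left_conjugate_nonneg hinv.nonneg (1 - α • (a : A))
  have hexp : star (1 - α • (a : A)) * ↑a⁻¹ * (1 - α • (a : A)) =
      ↑a⁻¹ - ((2 * α) • (1 : A) - α ^ 2 • ↑a) := by
    simp only [star_sub, star_one, star_smul, hsa.star_eq, star_trivial, sub_mul, mul_sub,
      smul_mul_assoc, mul_smul_comm, one_mul, mul_one, Units.mul_inv, Units.inv_mul]
    module
  rwa [hexp, sub_nonneg] at key

/-- Averaging `add_smul_ringInverse_le` gives `S + M m R ≤ M + m`, and the tangent-line bound at
`α = √(M m)` turns `- M m R` into `R⁻¹ - 2 √(M m)`. -/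
theorem sum_smul_le_ringInverse_sum_smul_ringInverse_add {ι : Type*} [Fintype ι] {p : ι → ℝ}
    (hp : ∀ t, 0 ≤ p t) (hp1 : ∑ t, p t = 1) {x : ι → A} {m M : ℝ} (hm : 0 < m) (hmM : m ≤ M)
    (hx : ∀ t, m • (1 : A) ≤ x t ∧ x t ≤ M • (1 : A)) :
    ∑ t, p t • x t ≤
      Ring.inverse (∑ t, p t • Ring.inverse (x t)) + (Real.sqrt M - Real.sqrt m) ^ 2 • (1 : A) := by
  set S := ∑ t, p t • x t
  set R := ∑ t, p t • Ring.inverse (x t)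
  have hR : IsStrictlyPositive R := IsStrictlyPositive.sum_smul hp hp1 fun t =>
    (IsStrictlyPositive.of_smul_one_le hm (hx t).1).ringInverse
  have hSR : S + (M * m) • R ≤ (M + m) • (1 : A) :=
    calc S + (M * m) • R = ∑ t, p t • (x t + (M * m) • Ring.inverse (x t)) := by
          simp only [S, R, smul_add, Finset.sum_add_distrib, Finset.smul_sum, smul_comm (M * m)]
      _ ≤ ∑ t, p t • ((M + m) • (1 : A)) := by
          gcongr with t
          · exact hp t
          · exact add_smul_ringInverse_le hm (hx t).1 (hx t).2
      _ = (M + m) • (1 : A) := by rw [← Finset.sum_smul, hp1, one_smul]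
  have htangent := two_mul_smul_one_sub_sq_smul_le_ringInverse hR (Real.sqrt (M * m))
  rw [Real.sq_sqrt (by nlinarith)] at htangent
  have hconst : (Real.sqrt M - Real.sqrt m) ^ 2 = M + m - 2 * Real.sqrt (M * m) := by
    rw [sub_sq, Real.sq_sqrt (hm.le.trans hmM), Real.sq_sqrt hm.le, Real.sqrt_mul (hm.le.trans hmM)]
    ring
  calc S ≤ (M + m) • (1 : A) - (M * m) • R := le_sub_iff_add_le.2 hSR
    _ = (M + m - 2 * Real.sqrt (M * m)) • (1 : A) +
          ((2 * Real.sqrt (M * m)) • (1 : A) - (M * m) • R) := by module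
    _ ≤ (M + m - 2 * Real.sqrt (M * m)) • (1 : A) + Ring.inverse R := by gcongr
    _ = Ring.inverse R + (Real.sqrt M - Real.sqrt m) ^ 2 • (1 : A) := by rw [hconst, add_comm]

end CStarAlgebra

theorem Fintype.sum_smul_sum_smul {ι κ M : Type*} [Fintype ι] [Fintype κ] [AddCommMonoid M]
    [Module ℝ M] (a : ι → ℝ) (b : κ → ℝ) (x : ι → κ → M) :
    ∑ i, a i • ∑ j, b j • x i j = ∑ t : ι × κ, (a t.1 * b t.2) • x t.1 t.2 := by
  simp only [Fintype.sum_prod_type, Finset.smul_sum, smul_smul]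

theorem Fintype.sum_smul_sum_smul_swap {ι κ M : Type*} [Fintype ι] [Fintype κ] [AddCommMonoid M]
    [Module ℝ M] (a : ι → ℝ) (b : κ → ℝ) (x : ι → κ → M) :
    ∑ j, b j • ∑ i, a i • x i j = ∑ t : ι × κ, (a t.1 * b t.2) • x t.1 t.2 := by
  simp only [Fintype.sum_prod_type_right, Finset.smul_sum, smul_smul, mul_comm]

variable {H : Type*} [NormedAddCommGroup H] [InnerProductSpace ℂ H] [CompleteSpace H]

theorem isPosDef_iff_isStrictlyPositive {T : H →L[ℂ] H} : IsPosDef T ↔ IsStrictlyPositive T := by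
  rw [IsStrictlyPositive.iff_of_unital, ContinuousLinearMap.nonneg_iff_isPositive]
  rfl

namespace OrderedMean

variable (G : OrderedMean H) {n : ℕ} {w : Fin n → ℝ}

theorem ringInverse_G_le (hw : IsProbVec w) {T : Fin n → H →L[ℂ] H}
    (hT : ∀ i, IsPosDef (T i)) :
    Ring.inverse (G.G n w T) ≤ ∑ i, w i • Ring.inverse (T i) := by
  have hS : IsStrictlyPositive (∑ i, w i • Ring.inverse (T i)) :=
    IsStrictlyPositive.sum_smul (fun i => (hw.1 i).le) hw.2 fun i =>
      (isPosDef_iff_isStrictlyPositive.1 (hT i)).ringInverse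
  simpa only [Ring.inverse_inverse hS.isUnit] using
    CStarAlgebra.ringInverse_le_ringInverse (G.harm_le n w T hw hT) hS.ringInverse

theorem G_G_le_sum_smul_sum_smul {k : ℕ} {l : Fin k → ℝ} (hw : IsProbVec w) (hl : IsProbVec l)
    {T : Fin n → Fin k → H →L[ℂ] H} (hT : ∀ i j, IsPosDef (T i j)) :
    G.G n w (fun i => G.G k l (T i)) ≤ ∑ i, w i • ∑ j, l j • T i j :=
  calc G.G n w (fun i => G.G k l (T i)) ≤ ∑ i, w i • G.G k l (T i) :=
        G.le_arith n w _ hw fun i => G.posDef k l _ hl (hT i)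
    _ ≤ ∑ i, w i • ∑ j, l j • T i j := by
        gcongr with i
        · exact (hw.1 i).le
        · exact G.le_arith k l _ hl (hT i)

theorem ringInverse_sum_smul_sum_smul_ringInverse_le_G_G {k : ℕ} {l : Fin k → ℝ}
    (hw : IsProbVec w) (hl : IsProbVec l) {T : Fin n → Fin k → H →L[ℂ] H}
    (hT : ∀ i j, IsPosDef (T i j)) :
    Ring.inverse (∑ j, l j • ∑ i, w i • Ring.inverse (T i j)) ≤
      G.G k l (fun j => G.G n w (fun i => T i j)) := by
  have hcol : ∀ j, IsPosDef (G.G n w fun i => T i j) := fun j => G.posDef n w _ hw (hT · j)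
  have hharm : IsStrictlyPositive (∑ j, l j • Ring.inverse (G.G n w fun i => T i j)) :=
    IsStrictlyPositive.sum_smul (fun j => (hl.1 j).le) hl.2 fun j =>
      (isPosDef_iff_isStrictlyPositive.1 (hcol j)).ringInverse
  refine le_trans ?_ (G.harm_le k l _ hl hcol)
  refine CStarAlgebra.ringInverse_le_ringInverse ?_ hharm
  gcongr with j
  · exact (hl.1 j).le
  · exact G.ringInverse_G_le hw (hT · j)

end OrderedMean

theorem mixture_sqrt_bound (G : OrderedMean H) {n k : ℕ} (w : Fin n → ℝ) (l : Fin k → ℝ)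
    (hw : IsProbVec w) (hl : IsProbVec l) (A : Fin n → Fin k → (H →L[ℂ] H))
    (hA : ∀ i j, IsPosDef (A i j)) (m M : ℝ) (hm : 0 < m) (hmM : m ≤ M)
    (hbd : ∀ i j, m • (1 : H →L[ℂ] H) ≤ A i j ∧ A i j ≤ M • (1 : H →L[ℂ] H)) :
    G.G n w (fun i => G.G k l (A i)) ≤
      G.G k l (fun j => G.G n w (fun i => A i j)) +
        ((Real.sqrt M - Real.sqrt m) ^ 2) • (1 : H →L[ℂ] H) := by
  have hwl : ∑ t : Fin n × Fin k, w t.1 * l t.2 = 1 := by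
    rw [Fintype.sum_prod_type, ← Fintype.sum_mul_sum, hw.2, hl.2, one_mul]
  calc G.G n w (fun i => G.G k l (A i)) ≤ ∑ i, w i • ∑ j, l j • A i j :=
        G.G_G_le_sum_smul_sum_smul hw hl hA
    _ ≤ Ring.inverse (∑ j, l j • ∑ i, w i • Ring.inverse (A i j)) +
          ((Real.sqrt M - Real.sqrt m) ^ 2) • (1 : H →L[ℂ] H) := by
        rw [Fintype.sum_smul_sum_smul, Fintype.sum_smul_sum_smul_swap]
        exact sum_smul_le_ringInverse_sum_smul_ringInverse_add (fun t : Fin n × Fin k => (mul_pos (hw.1 t.1) (hl.1 t.2)).le) hwl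
          hm hmM fun t : Fin n × Fin k => hbd t.1 t.2
    _ ≤ G.G k l (fun j => G.G n w (fun i => A i j)) +
          ((Real.sqrt M - Real.sqrt m) ^ 2) • (1 : H →L[ℂ] H) := by
        gcongr
        exact G.ringInverse_sum_smul_sum_smul_ringInverse_le_G_G hw hl hA
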